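/- arXiv:1803.06572 — 4 statements merged into one kernel-verified Lean document; each statement's English description precedes it below -/
import Mathlib

section
/- Pliss Lemma: Given real numbers a < b < c, there exists ρ > 0 (depending only on a, b, c) such that for any finite sequence a_1, ..., a_n of real numbers with a_i ≤ c for all i and (1/n)·Σ_{i=1}^n a_i ≥ b, there exist l indices 1 ≤ k_1 < ... < k_l ≤ n with l/n ≥ ρ such that for each k_i and every j with 1 ≤ j ≤ k_i, one has (1/(k_i − j + 1))·Σ_{s=j}^{k_i} a_s ≥ a. -/
/-- **Pliss Lemma.** Given `a < b < c`, there exists `ρ > 0` such that for any finite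
sequence `u 1, ..., u n` with `u i ≤ c` and average at least `b`, there is a set `S`
of "Pliss times" in `{1, ..., n}` of density at least `ρ` such that for every `k ∈ S`
and every `1 ≤ j ≤ k`, the average of `u` over `{j, ..., k}` is at least `a`. -/
theorem pliss_lemma (a b c : ℝ) (hab : a < b) (hbc : b < c) :
    ∃ ρ : ℝ, 0 < ρ ∧
      ∀ (n : ℕ), 1 ≤ n → ∀ u : ℕ → ℝ,
        (∀ i ∈ Finset.Icc 1 n, u i ≤ c) →
        b ≤ (1 / (n : ℝ)) * ∑ i ∈ Finset.Icc 1 n, u i →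
        ∃ S : Finset ℕ, S ⊆ Finset.Icc 1 n ∧ ρ ≤ (S.card : ℝ) / (n : ℝ) ∧
          ∀ k ∈ S, ∀ j, 1 ≤ j → j ≤ k →
            a ≤ (1 / ((k : ℝ) - (j : ℝ) + 1)) * ∑ s ∈ Finset.Icc j k, u s := by
  classical
  have hca : (0:ℝ) < c - a := by linarith
  refine ⟨(b - a) / (c - a), div_pos (by linarith) hca, ?_⟩
  intro n hn u hu hb
  set T : ℕ → ℝ := fun m => ∑ i ∈ Finset.Icc 1 m, (u i - a) with hTdef
  set P : ℕ → Prop := fun k => ∀ m' < k, T m' ≤ T k with hPdef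
  have hnpos : (0:ℝ) < (n:ℝ) := by exact_mod_cast hn
  -- sum over Icc j k in terms of T
  have hsplit : ∀ j k : ℕ, 1 ≤ j → j ≤ k →
      T (j-1) + ∑ s ∈ Finset.Icc j k, (u s - a) = T k := by
    intro j k hj hjk
    have h1 : Finset.Icc 1 (j-1) = Finset.Ioc 0 (j-1) := by
      ext x; simp [Finset.mem_Icc, Finset.mem_Ioc]; omega
    have h2 : Finset.Icc j k = Finset.Ioc (j-1) k := by
      ext x; simp [Finset.mem_Icc, Finset.mem_Ioc]; omega
    have h3 : Finset.Icc 1 k = Finset.Ioc 0 k := by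
      ext x; simp [Finset.mem_Icc, Finset.mem_Ioc]; omega
    rw [hTdef]; simp only [h1, h2, h3]
    exact Finset.sum_Ioc_consecutive _ (Nat.zero_le _) (by omega)
  have hcount : ∀ m, m ≤ n → T m ≤ (((Finset.Icc 1 m).filter P).card : ℝ) * (c - a) := by
    intro m
    induction m using Nat.strong_induction_on with
    | _ m ih =>
      intro hmn
      rcases Nat.eq_zero_or_pos m with rfl | hm
      · simp [hTdef]
      · by_cases hPm : P m
        · have hnotmem : m ∉ Finset.Icc 1 (m-1) := by simp [Finset.mem_Icc]; omega
          have h1 : Finset.Icc 1 m = insert m (Finset.Icc 1 (m-1)) := by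
            ext x; simp [Finset.mem_Icc]; omega
          have hsum : T m = (u m - a) + T (m-1) := by
            rw [hTdef]; simp only [h1]
            rw [Finset.sum_insert hnotmem]
          have hih := ih (m-1) (by omega) (by omega)
          have hum : u m ≤ c := hu m (Finset.mem_Icc.mpr ⟨hm, hmn⟩)
          have hcard : (((Finset.Icc 1 m).filter P).card : ℝ)
              = (((Finset.Icc 1 (m-1)).filter P).card : ℝ) + 1 := by
            rw [h1, Finset.filter_insert, if_pos hPm,
              Finset.card_insert_of_notMem (fun h => hnotmem (Finset.mem_of_mem_filter _ h))]
            push_cast; ring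
          rw [hcard]
          nlinarith [hih, hum, hsum]
        · have hPm' : ¬ ∀ m' < m, T m' ≤ T m := hPm
          push_neg at hPm'
          obtain ⟨m', hm', hlt⟩ := hPm'
          have hih := ih m' hm' (by omega)
          have hsub : (((Finset.Icc 1 m').filter P).card : ℝ)
              ≤ (((Finset.Icc 1 m).filter P).card : ℝ) := by
            exact_mod_cast Finset.card_le_card (Finset.filter_subset_filter _
              (Finset.Icc_subset_Icc_right (by omega)))
          nlinarith [hih, hsub, hca]
  refine ⟨(Finset.Icc 1 n).filter P, Finset.filter_subset _ _, ?_, ?_⟩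
  · -- density bound
    have hTn : (n:ℝ) * (b - a) ≤ T n := by
      have hs : T n = (∑ i ∈ Finset.Icc 1 n, u i) - (n:ℝ) * a := by
        simp only [hTdef]
        rw [Finset.sum_sub_distrib, Finset.sum_const, Nat.card_Icc]
        have : (n + 1 - 1 : ℕ) = n := by omega
        rw [this]; ring_nf
      have : (n:ℝ) * b ≤ ∑ i ∈ Finset.Icc 1 n, u i := by
        rw [one_div, inv_mul_eq_div, le_div_iff₀ hnpos] at hb
        linarith [hb]
      rw [hs]; linarith
    have hmain := hcount n le_rfl
    rw [div_le_div_iff₀ hca hnpos]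
    nlinarith [hTn, hmain]
  · intro k hk j hj hjk
    obtain ⟨hk1, hk2⟩ := Finset.mem_filter.mp hk
    have hPk : P k := hk2
    have hrec : T (j-1) ≤ T k := hPk (j-1) (by omega)
    have hsum0 : (0:ℝ) ≤ ∑ s ∈ Finset.Icc j k, (u s - a) := by
      have := hsplit j k hj hjk
      linarith
    have hcard : ((Finset.Icc j k).card : ℝ) = (k:ℝ) - (j:ℝ) + 1 := by
      rw [Nat.card_Icc]
      have hj' : j ≤ k + 1 := by omega
      push_cast [Nat.cast_sub hj']
      ring
    rw [Finset.sum_sub_distrib, Finset.sum_const, nsmul_eq_mul, hcard] at hsum0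
    have hd : (0:ℝ) < (k:ℝ) - (j:ℝ) + 1 := by
      have : (j:ℝ) ≤ (k:ℝ) := by exact_mod_cast hjk
      linarith
    rw [one_div, inv_mul_eq_div, le_div_iff₀ hd]
    linarith
end

section
/- For the full shift σ on Σ_k = {1,...,k}^ℤ (k ≥ 2) and any real number r with 0 < r < log k, there exists a closed σ-invariant subset Λ_r ⊆ Σ_k such that the topological entropy of σ restricted to Λ_r equals r. -/
open Dynamics

/-- The discrete uniformity on `Fin k`. -/
instance (k : ℕ) : UniformSpace (Fin k) := ⊥

/-- The shift map on the full two-sided shift over `k` symbols. -/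
def fullShift (k : ℕ) : (ℤ → Fin k) → (ℤ → Fin k) := fun x n => x (n + 1)

/-
For a shift-invariant set of sequences, the entropy of the shift is the exponential growth rate of
the number of words of length `n` it contains, so it suffices to build `Λ` with prescribed word
growth. Take a hierarchy of blocks: level-`0` blocks are single letters, and a level-`(i+1)` block
is a concatenation of `m i` level-`i` blocks of which only the first `f i` are free, the others
repeating the last free one. A level-`i` block has length `L i = ∏ m` and is determined by
`F i = ∏ f` free letters, and `Λ` consists of the sequences that split, for every `i`, into
level-`i` blocks. The periodic repetition of any level-`i` block lies in `Λ`, giving at least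
`k ^ F i` words of length `L i`; a word of length `j * L i` is fixed by its phase and the `j + 1`
level-`i` blocks covering it, giving at most `L i * k ^ (F i * (j + 1))` words. So the entropy is
`lim (F i / L i) * log k`. With `m i = i + 2`, taking `f i` least such that `F (i+1) / L (i+1)`
stays above `t = r / log k` gives `t < F (i+1) / L (i+1) ≤ t + 1 / (i + 1)`.
-/

open Filter Function Set Topology ExpGrowth
open SymbolicDynamics.FullShift (shift shift_apply shift_add)
open scoped Uniformity ENNReal

namespace Subshift

variable {α : Type*}

def window (c : ℤ) (n : ℕ) (x : ℤ → α) : Fin n → α := fun j => x (c + j)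

def language (Λ : Set (ℤ → α)) (n : ℕ) : Set (Fin n → α) := window 0 n '' Λ

lemma window_shift (a c : ℤ) (n : ℕ) (x : ℤ → α) :
    window c n (shift a x) = window (a + c) n x := by
  funext j
  simp only [window, shift_apply, add_assoc]

lemma window_eq_window_iff {c : ℤ} {n : ℕ} {x y : ℤ → α} :
    window c n x = window c n y ↔ ∀ t, c ≤ t → t < c + n → x t = y t := by
  refine ⟨fun h t hct htn => ?_, fun h => funext fun j => h _ (by omega) (by omega)⟩
  have := congrFun h ⟨(t - c).toNat, by omega⟩
  simp only [window] at this
  rwa [Int.toNat_of_nonneg (by omega), add_sub_cancel] at this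

lemma image_window_eq_language {Λ : Set (ℤ → α)} (hΛ : ∀ a, MapsTo (shift a) Λ Λ)
    (c : ℤ) (n : ℕ) : window c n '' Λ = language Λ n := by
  refine Subset.antisymm ?_ ?_
  · rintro _ ⟨x, hx, rfl⟩
    exact ⟨shift c x, hΛ c hx, by rw [window_shift, add_zero]⟩
  · rintro _ ⟨x, hx, rfl⟩
    exact ⟨shift (-c) x, hΛ (-c) hx, by rw [window_shift, neg_add_cancel]⟩

lemma monotone_card_language [Finite α] (Λ : Set (ℤ → α)) :
    Monotone fun n => Nat.card (language Λ n) := by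
  intro n n' h
  have : language Λ n = (fun w => w ∘ Fin.castLE h) '' language Λ n' := by
    rw [language, language, image_image]
    rfl
  simp only [this]
  exact Nat.card_image_le (toFinite _)

section Entropy

lemma coverMincard_eq_card_image {X β : Type*} [Finite β] {T : X → X} {F : Set X}
    {U : SetRel X X} {n : ℕ} (φ : X → β)
    (hφ : ∀ x y, (x, y) ∈ dynEntourage T U n ↔ φ x = φ y) :
    coverMincard T F U n = Nat.card (φ '' F) := by
  classical
  apply le_antisymm
  · choose g hg using fun w : φ '' F => w.2
    have := Fintype.ofFinite (φ '' F)
    have hcover : IsDynCoverOf T F U n (Finset.univ.image g) := fun x hx =>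
      ⟨g ⟨φ x, x, hx, rfl⟩, by simp, (hφ _ _).2 (hg ⟨φ x, x, hx, rfl⟩).2.symm⟩
    refine hcover.coverMincard_le_card.trans ?_
    rw [Nat.card_eq_fintype_card]
    exact_mod_cast Finset.card_image_le
  · refine le_iInf₂ fun s hs => ?_
    have hsub : φ '' F ⊆ φ '' s := by
      rintro _ ⟨x, hx, rfl⟩
      obtain ⟨y, hy, hxy⟩ := hs hx
      exact ⟨y, hy, ((hφ x y).1 hxy).symm⟩
    have h := (Nat.card_mono (toFinite _) hsub).trans (Nat.card_image_le s.finite_toSet)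
    rw [Nat.card_coe_set_eq (s : Set X), ncard_coe_finset] at h
    exact_mod_cast h

lemma iterate_shift_one (j : ℕ) :
    (shift (1 : ℤ) : (ℤ → α) → ℤ → α)^[j] = shift (j : ℤ) := by
  induction j with
  | zero => funext x n; simp
  | succ j ih =>
    funext x
    rw [iterate_succ_apply', ih, ← shift_add]
    push_cast
    rfl

def cylinderRel (m : ℕ) : SetRel (ℤ → α) (ℤ → α) :=
  {p | ∀ t : ℤ, -m ≤ t → t ≤ m → p.1 t = p.2 t}

lemma hasBasis_uniformity_cylinderRel [UniformSpace α] [DiscreteUniformity α] :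
    (𝓤 (ℤ → α)).HasBasis (fun _ => True) (cylinderRel (α := α)) := by
  simp only [Pi.uniformity, DiscreteUniformity.eq_principal_setRelId, comap_principal]
  refine (hasBasis_iInf_principal_finite _).to_hasBasis (fun I hI => ?_) fun m _ =>
    ⟨Icc (-m : ℤ) m, finite_Icc _ _, fun p hp t h1 h2 => ?_⟩
  · refine ⟨hI.toFinset.sup Int.natAbs, trivial, fun p hp => mem_iInter₂.2 fun t ht => ?_⟩
    have := Finset.le_sup (f := Int.natAbs) (hI.mem_toFinset.2 ht)
    exact hp t (by omega) (by omega)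
  · exact mem_iInter₂.1 hp t ⟨h1, h2⟩

lemma mem_dynEntourage_cylinderRel {m n : ℕ} (hn : 0 < n) {x y : ℤ → α} :
    (x, y) ∈ dynEntourage (shift 1) (cylinderRel m) n ↔
      window (-m) (n + 2 * m) x = window (-m) (n + 2 * m) y := by
  simp only [mem_dynEntourage, iterate_shift_one, window_eq_window_iff]
  refine ⟨fun h t h1 h2 => ?_, fun h j hj t h1 h2 => h _ (by omega) (by omega)⟩
  obtain ⟨j, hj, ht⟩ : ∃ j : ℕ, j < n ∧ -(m : ℤ) ≤ t - j ∧ t - j ≤ m :=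
    ⟨(t + m).toNat - 2 * m, by omega, by omega, by omega⟩
  simpa using h j hj (t - j) ht.1 ht.2

lemma tendsto_natCast_add_div_natCast (c : ℕ) :
    Tendsto (fun n : ℕ => ((n + c : ℕ) : EReal) / n) atTop (𝓝 1) := by
  have h : Tendsto (fun n : ℕ => (1 : ℝ) + c / n) atTop (𝓝 1) := by
    simpa using tendsto_const_nhds.add (tendsto_const_div_atTop_nhds_zero_nat (c : ℝ))
  refine (EReal.tendsto_coe.2 h).congr' ?_
  filter_upwards [eventually_gt_atTop 0] with n hn
  have : (1 + c / n : ℝ) = ((n + c : ℕ) : ℝ) / (n : ℝ) := by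
    push_cast
    field_simp
  rw [this, EReal.coe_div, EReal.coe_natCast, EReal.coe_natCast]

lemma coverEntropyEntourage_cylinderRel [Finite α] {Λ : Set (ℤ → α)}
    (hΛ : ∀ a, MapsTo (shift a) Λ Λ) (m : ℕ) :
    coverEntropyEntourage (shift 1) Λ (cylinderRel m) =
      expGrowthSup fun n => (Nat.card (language Λ n) : ℝ≥0∞) := by
  have hcover : (fun n => (coverMincard (shift 1) Λ (cylinderRel m) n : ℝ≥0∞)) =ᶠ[atTop]
      fun n => (Nat.card (language Λ (n + 2 * m)) : ℝ≥0∞) := by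
    filter_upwards [eventually_gt_atTop 0] with n hn
    rw [coverMincard_eq_card_image _ fun x y => mem_dynEntourage_cylinderRel hn,
      image_window_eq_language hΛ]
    rfl
  have hmono : Monotone fun n => (Nat.card (language Λ n) : ℝ≥0∞) :=
    Nat.mono_cast.comp (monotone_card_language Λ)
  rw [coverEntropyEntourage, expGrowthSup_congr hcover]
  have := hmono.expGrowthSup_comp (tendsto_natCast_add_div_natCast (2 * m)) one_ne_zero
    (EReal.coe_ne_top 1)
  rwa [one_mul] at this

theorem coverEntropy_shift_eq_expGrowthSup [UniformSpace α] [DiscreteUniformity α] [Finite α]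
    {Λ : Set (ℤ → α)} (hΛ : ∀ a, MapsTo (shift a) Λ Λ) :
    coverEntropy (shift 1) Λ =
      expGrowthSup fun n => (Nat.card (language Λ n) : ℝ≥0∞) := by
  simp only [coverEntropy_eq_iSup_basis hasBasis_uniformity_cylinderRel,
    coverEntropyEntourage_cylinderRel hΛ, iSup_const]

end Entropy

section BlockShift

def blockShift (L : ℕ) (B : Set (Fin L → α)) : Set (ℤ → α) :=
  {x | ∃ p : ℤ, ∀ q : ℤ, window (p + q * L) L x ∈ B}

variable {L : ℕ} {B : Set (Fin L → α)}

lemma mapsTo_shift_blockShift (a : ℤ) : MapsTo (shift a) (blockShift L B) (blockShift L B) :=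
  fun _ ⟨p, hp⟩ => ⟨p - a, fun q => by
    rw [window_shift]
    convert hp q using 2
    ring⟩

lemma exists_phase_of_mem_blockShift (hL : 0 < L) {x : ℤ → α} (hx : x ∈ blockShift L B) :
    ∃ p ∈ Ico (0 : ℤ) L, ∀ q : ℤ, window (p + q * L) L x ∈ B := by
  obtain ⟨p, hp⟩ := hx
  refine ⟨p % L, ⟨Int.emod_nonneg _ (by omega), Int.emod_lt_of_pos _ (by omega)⟩,
    fun q => ?_⟩
  convert hp (q - p / L) using 2
  linear_combination Int.emod_add_mul_ediv p L

lemma isClosed_blockShift [TopologicalSpace α] [DiscreteTopology α] (hL : 0 < L) :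
    IsClosed (blockShift L B) := by
  have : blockShift L B =
      ⋃ p ∈ Ico (0 : ℤ) L, ⋂ q : ℤ, window (p + q * L) L ⁻¹' B := by
    ext x
    simp only [mem_iUnion, mem_iInter, mem_preimage, exists_prop]
    exact ⟨exists_phase_of_mem_blockShift hL, fun ⟨p, _, hp⟩ => ⟨p, hp⟩⟩
  rw [this]
  exact (finite_Ico _ _).isClosed_biUnion fun p _ => isClosed_iInter fun q =>
    (isClosed_discrete B).preimage (continuous_pi fun j => continuous_apply _)

lemma card_language_blockShift_le [Finite α] (hL : 0 < L) (j : ℕ) :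
    Nat.card (language (blockShift L B) (j * L)) ≤ L * Nat.card B ^ (j + 1) := by
  -- a word is read off the phase `p` and the blocks starting at `p - L, p, …, p + (j - 1) * L`
  let R : Fin L × (Fin (j + 1) → B) → Fin (j * L) → α := fun pb t =>
    (pb.2 ⟨(t + L - pb.1) / L, by
      have := t.2
      rw [Nat.div_lt_iff_lt_mul hL, Nat.succ_mul]
      omega⟩ : Fin L → α) ⟨(t + L - pb.1) % L, Nat.mod_lt _ hL⟩
  have hsub : language (blockShift L B) (j * L) ⊆ range R := by
    rintro _ ⟨x, hx, rfl⟩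
    obtain ⟨p, ⟨hp0, hpL⟩, hp⟩ := exists_phase_of_mem_blockShift hL hx
    refine ⟨(⟨p.toNat, by omega⟩, fun c => ⟨window (p + ((c : ℕ) - 1 : ℤ) * L) L x, hp _⟩),
      ?_⟩
    funext t
    simp only [R, window]
    congr 1
    have hu : ((t + L - p.toNat : ℕ) : ℤ) = t + L - p := by omega
    have := Nat.div_add_mod (t + L - p.toNat) L
    generalize (t + L - p.toNat) / L = d at this
    generalize (t + L - p.toNat) % L = e at this
    rw [← this] at hu
    push_cast at hu
    linear_combination hu
  calc _ ≤ Nat.card (range R) := Nat.card_mono (toFinite _) hsub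
    _ ≤ Nat.card (Fin L × (Fin (j + 1) → B)) := Finite.card_range_le R
    _ = _ := by simp [Nat.card_prod, Nat.card_fun]

end BlockShift

def cyclic {L : ℕ} (hL : 0 < L) (w : Fin L → α) : ℤ → α := fun n =>
  w ⟨(n % L).toNat, by have := Int.emod_lt_of_pos n (by omega : (0 : ℤ) < L); omega⟩

lemma cyclic_add_of_dvd {L : ℕ} (hL : 0 < L) (w : Fin L → α) {a : ℤ} (ha : (L : ℤ) ∣ a)
    (n : ℤ) : cyclic hL w (a + n) = cyclic hL w n := by
  simp only [cyclic, Int.add_emod, Int.emod_eq_zero_of_dvd ha, zero_add, Int.emod_emod]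

lemma window_cyclic {L : ℕ} (hL : 0 < L) (w : Fin L → α) : window 0 L (cyclic hL w) = w := by
  funext j
  simp only [window, cyclic, zero_add]
  congr
  rw [Int.emod_eq_of_lt (by omega) (by omega), Int.toNat_natCast]

section Hierarchy

variable (m f : ℕ → ℕ)

def blockLen : ℕ → ℕ
  | 0 => 1
  | i + 1 => m i * blockLen i

def freeLen : ℕ → ℕ
  | 0 => 1
  | i + 1 => f i * freeLen i

/-- The `M` blocks of length `L` are `ws` followed by copies of its last entry. Repeating a block
rather than padding is what lets the periodic repetition of a level-`i` block split into blocks of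
every level `j ≥ i`. -/
def assemble {M L g : ℕ} (hg : 0 < g) (ws : Fin g → Fin L → α) : Fin (M * L) → α :=
  fun t => ws ⟨min t.divNat (g - 1), by omega⟩ t.modNat

def blocks (hf : ∀ i, 0 < f i) : (i : ℕ) → Set (Fin (blockLen m i) → α)
  | 0 => univ
  | i + 1 => assemble (M := m i) (hf i) '' univ.pi fun _ => blocks hf i

def hierarchicalShift (hf : ∀ i, 0 < f i) : Set (ℤ → α) :=
  ⋂ i, blockShift (blockLen m i) (blocks m f hf i)

variable {m f}

lemma assemble_finProdFinEquiv {M L g : ℕ} (hg : 0 < g) (ws : Fin g → Fin L → α) (c : Fin M)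
    (s : Fin L) : assemble hg ws (finProdFinEquiv (c, s)) = ws ⟨min c (g - 1), by omega⟩ s := by
  have h := finProdFinEquiv.symm_apply_apply (c, s)
  rw [finProdFinEquiv_symm_apply, Prod.mk.injEq] at h
  simp only [assemble, h]

lemma assemble_injective {M L g : ℕ} (hg : 0 < g) (hgM : g ≤ M) :
    Injective (assemble (α := α) (M := M) (L := L) hg) := by
  intro ws ws' h
  funext c s
  have := congrFun h (finProdFinEquiv (⟨c, by omega⟩, s))
  simp only [assemble_finProdFinEquiv, show min (c : ℕ) (g - 1) = c by omega] at this
  exact this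

lemma blockLen_pos (hm : ∀ i, 0 < m i) (i : ℕ) : 0 < blockLen m i := by
  induction i with
  | zero => exact Nat.one_pos
  | succ i ih => exact Nat.mul_pos (hm i) ih

lemma blockLen_dvd {i j : ℕ} (h : i ≤ j) : blockLen m i ∣ blockLen m j := by
  induction j, h using Nat.le_induction with
  | base => rfl
  | succ j _ ih => exact ih.mul_left _

lemma strictMono_blockLen (hm : ∀ i, 2 ≤ m i) : StrictMono (blockLen m) :=
  strictMono_nat_of_lt_succ fun i => by
    have := blockLen_pos (fun i => (hm i).trans_lt' two_pos) i
    show _ < m i * _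
    nlinarith [hm i]

variable (hf : ∀ i, 0 < f i)

lemma card_blocks (hfm : ∀ i, f i ≤ m i) (i : ℕ) :
    Nat.card (blocks (α := α) m f hf i) = Nat.card α ^ freeLen f i := by
  induction i with
  | zero => simp [blocks, freeLen, blockLen, Nat.card_fun]
  | succ i ih =>
    change Nat.card (assemble (M := m i) (hf i) '' _) = _
    rw [Nat.card_image_of_injective (assemble_injective _ (hfm i)),
      Nat.card_congr (Equiv.Set.univPi _), Nat.card_pi, Finset.prod_const, ih, freeLen,
      Finset.card_univ, Fintype.card_fin, ← pow_mul, mul_comm]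

lemma mem_blocks_of_mem_blocks_succ {i : ℕ} {w : Fin (blockLen m (i + 1)) → α}
    (hw : w ∈ blocks m f hf (i + 1)) (c : Fin (m i)) :
    (fun s => w (finProdFinEquiv (c, s))) ∈ blocks m f hf i := by
  obtain ⟨ws, hws, rfl⟩ := hw
  simp only [assemble_finProdFinEquiv]
  exact hws _ trivial

lemma blockShift_succ_subset {i : ℕ} (hm : 0 < m i) :
    blockShift (blockLen m (i + 1)) (blocks m f hf (i + 1)) ⊆
      blockShift (blockLen m i) (blocks (α := α) m f hf i) := by
  rintro x ⟨p, hp⟩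
  refine ⟨p, fun q => ?_⟩
  have hc : ((q % m i).toNat : ℤ) = q % m i := Int.toNat_of_nonneg (Int.emod_nonneg _ (by omega))
  have hcm : (q % m i).toNat < m i := by
    have := Int.emod_lt_of_pos q (by omega : (0 : ℤ) < m i)
    omega
  convert mem_blocks_of_mem_blocks_succ hf (hp (q / m i)) ⟨_, hcm⟩ using 1
  funext s
  simp only [window, finProdFinEquiv_apply_val]
  congr 1
  push_cast [blockLen, hc]
  linear_combination (blockLen m i : ℤ) * (Int.emod_add_mul_ediv q (m i)).symm

lemma antitone_blockShift_blocks (hm : ∀ i, 0 < m i) :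
    Antitone fun i => blockShift (blockLen m i) (blocks (α := α) m f hf i) :=
  antitone_nat_of_succ_le fun i => blockShift_succ_subset hf (hm i)

lemma mapsTo_shift_hierarchicalShift (a : ℤ) :
    MapsTo (shift a) (hierarchicalShift m f hf) (hierarchicalShift (α := α) m f hf) :=
  fun _ hx => mem_iInter.2 fun i => mapsTo_shift_blockShift a (mem_iInter.1 hx i)

lemma isClosed_hierarchicalShift [TopologicalSpace α] [DiscreteTopology α] (hm : ∀ i, 0 < m i) :
    IsClosed (hierarchicalShift (α := α) m f hf) :=
  isClosed_iInter fun i => isClosed_blockShift (blockLen_pos hm i)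

lemma window_cyclic_mem_blocks (hm : ∀ i, 0 < m i) {i j : ℕ} (hij : i ≤ j)
    {w : Fin (blockLen m i) → α} (hw : w ∈ blocks m f hf i) :
    window 0 (blockLen m j) (cyclic (blockLen_pos hm i) w) ∈ blocks m f hf j := by
  induction j, hij using Nat.le_induction with
  | base => rwa [window_cyclic]
  | succ j hij ih =>
    refine ⟨fun _ => window 0 (blockLen m j) (cyclic (blockLen_pos hm i) w), fun _ _ => ih, ?_⟩
    funext t
    obtain ⟨⟨c, s⟩, rfl⟩ := (finProdFinEquiv (m := m j) (n := blockLen m j)).surjective t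
    rw [assemble_finProdFinEquiv]
    simp only [window, finProdFinEquiv_apply_val]
    push_cast
    rw [zero_add, zero_add, add_comm, cyclic_add_of_dvd]
    exact (Int.natCast_dvd_natCast.2 (blockLen_dvd hij)).mul_right _

lemma cyclic_mem_hierarchicalShift (hm : ∀ i, 0 < m i) {i : ℕ} {w : Fin (blockLen m i) → α}
    (hw : w ∈ blocks m f hf i) : cyclic (blockLen_pos hm i) w ∈ hierarchicalShift m f hf := by
  have hcyc : ∀ j, i ≤ j →
      cyclic (blockLen_pos hm i) w ∈ blockShift (blockLen m j) (blocks m f hf j) := fun j hij =>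
    ⟨0, fun q => by
      convert window_cyclic_mem_blocks hf hm hij hw using 1
      funext s
      simp only [window, zero_add]
      exact cyclic_add_of_dvd _ _ ((Int.natCast_dvd_natCast.2 (blockLen_dvd hij)).mul_left _) _⟩
  exact mem_iInter.2 fun j =>
    antitone_blockShift_blocks hf hm (le_max_right i j) (hcyc _ (le_max_left i j))

lemma blocks_subset_language (hm : ∀ i, 0 < m i) (i : ℕ) :
    blocks m f hf i ⊆ language (hierarchicalShift (α := α) m f hf) (blockLen m i) :=
  fun w hw => ⟨_, cyclic_mem_hierarchicalShift hf hm hw, window_cyclic _ w⟩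

lemma log_natCast_pow (n F : ℕ) (hn : 0 < n) :
    ENNReal.log ((n : ℝ≥0∞) ^ F) = ((F * Real.log n : ℝ) : EReal) := by
  rw [ENNReal.log_pow, ← ENNReal.ofReal_natCast, ENNReal.log_ofReal_of_pos (by positivity),
    EReal.coe_mul, EReal.coe_natCast]

variable [Finite α] (hfm : ∀ i, f i ≤ m i)
include hfm

lemma pow_freeLen_le_card_language (i : ℕ) :
    Nat.card α ^ freeLen f i ≤
      Nat.card (language (hierarchicalShift (α := α) m f hf) (blockLen m i)) :=
  card_blocks hf hfm i ▸ Nat.card_mono (toFinite _)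
    (blocks_subset_language hf (fun i => (hf i).trans_le (hfm i)) i)

lemma card_language_mul_blockLen_le (i j : ℕ) :
    Nat.card (language (hierarchicalShift (α := α) m f hf) (j * blockLen m i)) ≤
      blockLen m i * (Nat.card α ^ freeLen f i) ^ (j + 1) :=
  card_blocks hf hfm i ▸ (Nat.card_mono (toFinite _) (image_mono (iInter_subset _ i))).trans
    (card_language_blockShift_le (blockLen_pos (fun i => (hf i).trans_le (hfm i)) i) j)

variable [Nonempty α]

lemma expGrowthSup_card_language_hierarchicalShift_le (i : ℕ) :
    expGrowthSup (fun n =>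
        (Nat.card (language (hierarchicalShift (α := α) m f hf) n) : ℝ≥0∞)) ≤
      ((freeLen f i * Real.log (Nat.card α) / blockLen m i : ℝ) : EReal) := by
  set L := blockLen m i
  set N := Nat.card α ^ freeLen f i
  have hL : 0 < L := blockLen_pos (fun i => (hf i).trans_le (hfm i)) i
  have hmono : Monotone fun n =>
      (Nat.card (language (hierarchicalShift (α := α) m f hf) n) : ℝ≥0∞) :=
    Nat.mono_cast.comp (monotone_card_language _)
  have hsub : expGrowthSup (fun j => (Nat.card (language (hierarchicalShift (α := α) m f hf)
      (L * j)) : ℝ≥0∞)) ≤ expGrowthSup fun j => (N : ℝ≥0∞) ^ j := by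
    refine expGrowthSup_le_of_eventually_le (b := L * N) (by finiteness)
      (Eventually.of_forall fun j => ?_)
    have := card_language_mul_blockLen_le (α := α) hf hfm i j
    rw [mul_comm L j]
    exact_mod_cast this.trans_eq (by ring)
  rw [hmono.expGrowthSup_comp_mul hL.ne', expGrowthSup_pow, Nat.cast_pow,
    log_natCast_pow _ _ (Nat.card_pos (α := α))] at hsub
  rw [EReal.coe_div, EReal.le_div_iff_mul_le (by exact_mod_cast hL) (EReal.coe_ne_top _),
    EReal.coe_natCast, mul_comm]
  exact hsub

theorem expGrowthSup_card_language_hierarchicalShift (hm : ∀ i, 2 ≤ m i) {t : ℝ}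
    (ht : Tendsto (fun i => (freeLen f i : ℝ) / blockLen m i) atTop (𝓝 t)) :
    expGrowthSup (fun n =>
        (Nat.card (language (hierarchicalShift (α := α) m f hf) n) : ℝ≥0∞)) =
      ((t * Real.log (Nat.card α) : ℝ) : EReal) := by
  have hlim : Tendsto
      (fun i => ((freeLen f i * Real.log (Nat.card α) / blockLen m i : ℝ) : EReal))
      atTop (𝓝 ((t * Real.log (Nat.card α) : ℝ) : EReal)) := by
    refine EReal.tendsto_coe.2 ((ht.mul_const (Real.log (Nat.card α))).congr fun i => ?_)
    ring
  refine le_antisymm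
    (ge_of_tendsto' hlim (expGrowthSup_card_language_hierarchicalShift_le hf hfm)) ?_
  rw [← hlim.limsup_eq]
  refine (limsup_le_limsup (Eventually.of_forall fun i => ?_)).trans
    ((strictMono_blockLen hm).tendsto_atTop.limsup_comp_le_limsup (u := fun n =>
      ENNReal.log (Nat.card (language (hierarchicalShift (α := α) m f hf) n)) / n))
  rw [EReal.coe_div, EReal.coe_natCast, comp_apply, ← log_natCast_pow _ _ Nat.card_pos]
  refine EReal.div_le_div_right_of_nonneg (by positivity) (ENNReal.log_le_log ?_)
  exact_mod_cast pow_freeLen_le_card_language hf hfm i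

end Hierarchy

section Greedy

open Nat

noncomputable def greedyFreeLen (t : ℝ) : ℕ → ℕ
  | 0 => 1
  | i + 1 => (⌊(i + 2) * t * (i + 1)! / greedyFreeLen t i⌋₊ + 1) * greedyFreeLen t i

/-- The least `f` with `t * (i + 2)! < f * greedyFreeLen t i`, where `(i + 2)!` is the length of a
level-`(i + 1)` block. -/
noncomputable def greedyFree (t : ℝ) (i : ℕ) : ℕ :=
  ⌊(i + 2) * t * (i + 1)! / greedyFreeLen t i⌋₊ + 1

noncomputable def greedyRatio (t : ℝ) (i : ℕ) : ℝ := greedyFreeLen t i / (i + 1)!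

variable {t : ℝ}

lemma greedyFreeLen_succ (i : ℕ) :
    greedyFreeLen t (i + 1) = greedyFree t i * greedyFreeLen t i := rfl

lemma freeLen_greedyFree : freeLen (greedyFree t) = greedyFreeLen t := by
  funext i
  induction i with
  | zero => rfl
  | succ i ih => rw [freeLen, ih, greedyFreeLen_succ]

lemma blockLen_add_two (i : ℕ) : blockLen (· + 2) i = (i + 1)! := by
  induction i with
  | zero => rfl
  | succ i ih => rw [blockLen, ih, factorial_succ (i + 1)]

lemma greedyFreeLen_pos (i : ℕ) : 0 < greedyFreeLen t i := by
  induction i with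
  | zero => exact one_pos
  | succ i ih => exact Nat.mul_pos (succ_pos _) ih

lemma greedyRatio_succ (i : ℕ) :
    greedyRatio t (i + 1) = greedyFree t i * greedyFreeLen t i / ((i + 2) * (i + 1)!) := by
  rw [greedyRatio, greedyFreeLen_succ, factorial_succ (i + 1)]
  push_cast
  ring_nf

lemma lt_greedyFree (i : ℕ) :
    (i + 2) * t * (i + 1)! < greedyFree t i * greedyFreeLen t i := by
  have hF : (0 : ℝ) < greedyFreeLen t i := by exact_mod_cast greedyFreeLen_pos i
  have := lt_floor_add_one ((i + 2) * t * (i + 1)! / greedyFreeLen t i)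
  rw [div_lt_iff₀ hF] at this
  simpa [greedyFree] using this

lemma greedyFree_le_add_one (ht0 : 0 ≤ t) (i : ℕ) :
    greedyFree t i * greedyFreeLen t i ≤ (i + 2) * t * (i + 1)! + greedyFreeLen t i := by
  have hF : (0 : ℝ) < greedyFreeLen t i := by exact_mod_cast greedyFreeLen_pos i
  have := floor_le (by positivity : 0 ≤ (i + 2) * t * (i + 1)! / greedyFreeLen t i)
  rw [le_div_iff₀ hF] at this
  rw [greedyFree, cast_succ]
  linarith

lemma lt_greedyRatio (ht1 : t < 1) (i : ℕ) : t < greedyRatio t i := by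
  cases i with
  | zero => simpa [greedyRatio, greedyFreeLen] using ht1
  | succ i =>
    rw [greedyRatio_succ, lt_div_iff₀ (by positivity)]
    linarith [lt_greedyFree (t := t) i]

lemma greedyFree_le (ht1 : t < 1) (i : ℕ) : greedyFree t i ≤ i + 2 := by
  have hF : (0 : ℝ) < greedyFreeLen t i := by exact_mod_cast greedyFreeLen_pos i
  have hρ := lt_greedyRatio ht1 i
  rw [greedyRatio, lt_div_iff₀ (by positivity)] at hρ
  have : ⌊(i + 2) * t * (i + 1)! / greedyFreeLen t i⌋₊ < i + 2 := by
    refine (floor_lt' (by omega)).2 ?_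
    rw [div_lt_iff₀ hF]
    push_cast
    nlinarith
  rw [greedyFree]
  omega

lemma greedyRatio_le_one (ht1 : t < 1) (i : ℕ) : greedyRatio t i ≤ 1 := by
  induction i with
  | zero => simp [greedyRatio, greedyFreeLen]
  | succ i ih =>
    rw [greedyRatio, div_le_one (by positivity)] at ih
    rw [greedyRatio_succ, div_le_one (by positivity)]
    have hf : (greedyFree t i : ℝ) ≤ i + 2 := by exact_mod_cast greedyFree_le ht1 i
    exact mul_le_mul hf ih (by positivity) (by positivity)

lemma greedyRatio_succ_le (ht0 : 0 ≤ t) (ht1 : t < 1) (i : ℕ) :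
    greedyRatio t (i + 1) ≤ t + 1 / (i + 1) := by
  have hρ := greedyRatio_le_one ht1 i
  rw [greedyRatio, div_le_one (by positivity)] at hρ
  rw [greedyRatio_succ, div_le_iff₀ (by positivity)]
  have hL : (0 : ℝ) < (i + 1)! := by positivity
  have : ((i + 1)! : ℝ) ≤ 1 / (i + 1) * ((i + 2) * (i + 1)!) := by
    rw [one_div_mul_eq_div, le_div_iff₀ (by positivity)]
    nlinarith
  nlinarith [greedyFree_le_add_one ht0 i]

lemma tendsto_greedyRatio (ht0 : 0 ≤ t) (ht1 : t < 1) :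
    Tendsto (greedyRatio t) atTop (𝓝 t) := by
  refine (tendsto_add_atTop_iff_nat 1).1 (tendsto_of_tendsto_of_tendsto_of_le_of_le
    tendsto_const_nhds ?_ (fun i => (lt_greedyRatio ht1 _).le) (greedyRatio_succ_le ht0 ht1))
  simpa using tendsto_const_nhds.add (tendsto_one_div_add_atTop_nhds_zero_nat (𝕜 := ℝ))

end Greedy

end Subshift

open Subshift

/-- Intermediate value property of topological entropy for the full shift:
for any `0 < r < log k` there is a closed shift-invariant subset of `Σ_k`
whose topological entropy is exactly `r`. -/
theorem exists_subshift_with_entropy (k : ℕ) (hk : 2 ≤ k) (r : ℝ)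
    (hr0 : 0 < r) (hrk : r < Real.log k) :
    ∃ Λ : Set (ℤ → Fin k), IsClosed Λ ∧ Set.MapsTo (fullShift k) Λ Λ ∧
      coverEntropy (fullShift k) Λ = (r : EReal) := by
  have hlog : 0 < Real.log k := hr0.trans hrk
  set t := r / Real.log k
  have ht0 : 0 ≤ t := div_nonneg hr0.le hlog.le
  have ht1 : t < 1 := (div_lt_one hlog).2 hrk
  have hf : ∀ i, 0 < greedyFree t i := fun i => Nat.succ_pos _
  have : Nonempty (Fin k) := ⟨⟨0, by omega⟩⟩
  have ht : Tendsto (fun i => (freeLen (greedyFree t) i : ℝ) / blockLen (· + 2) i) atTop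
      (𝓝 t) :=
    (tendsto_greedyRatio ht0 ht1).congr fun i => by
      rw [greedyRatio, freeLen_greedyFree, blockLen_add_two]
  have hshift : fullShift k = shift 1 := funext fun x => funext fun n => congrArg x (add_comm n 1)
  refine ⟨hierarchicalShift (· + 2) (greedyFree t) hf,
    isClosed_hierarchicalShift hf fun i => Nat.succ_pos _,
    hshift ▸ mapsTo_shift_hierarchicalShift hf 1, ?_⟩
  rw [hshift, coverEntropy_shift_eq_expGrowthSup (mapsTo_shift_hierarchicalShift hf),
    expGrowthSup_card_language_hierarchicalShift hf (greedyFree_le ht1) (fun i => by omega) ht,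
    Nat.card_fin, div_mul_cancel₀ _ hlog.ne']
end

section
/- Let f be a homeomorphism of a compact metric space M whose strong unstable 'foliation' satisfies: (i) for every ε > 0 there is L > 0 such that every leaf-ball of radius L is ε-dense; and (ii) f uniformly expands leaf distances, i.e. there exists τ > 1 with d_leaf(f(x), f(y)) ≥ τ·d_leaf(x,y) for points on the same leaf. Then f is topologically mixing: for any nonempty open sets U, V there exists N such that f^n(U) ∩ V ≠ ∅ for all n ≥ N. -/
/-- A set `S` is `ε`-dense if every point lies within distance `ε` of `S`. -/
def EpsDense {M : Type*} [MetricSpace M] (ε : ℝ) (S : Set M) : Prop :=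
  ∀ m : M, ∃ s ∈ S, dist m s ≤ ε

/-!
An open set `U` contains a leaf ball `B x r`. Expansion makes `fⁿ '' U` contain the leaf ball
of radius `τⁿ r` around `fⁿ x`, and once `τⁿ r ≥ L(ε)` that ball is `ε`-dense, so it meets
any metric ball of radius larger than `ε`, in particular one inside `V`.
-/

open Metric Set

section LeafBalls

variable {α : Type*} (g : α → α) (B : α → ℝ → Set α) {τ : ℝ}

theorem leafBall_iterate_subset_image_iterate (hτ : 0 < τ)
    (hexp : ∀ (x : α) (L : ℝ), 0 < L → B (g x) (τ * L) ⊆ g '' B x L)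
    (x : α) {r : ℝ} (hr : 0 < r) (n : ℕ) :
    B (g^[n] x) (τ ^ n * r) ⊆ g^[n] '' B x r := by
  induction n with
  | zero => simp
  | succ n ih =>
    calc B (g^[n + 1] x) (τ ^ (n + 1) * r)
        = B (g (g^[n] x)) (τ * (τ ^ n * r)) := by
          rw [Function.iterate_succ_apply', pow_succ, mul_comm _ τ, mul_assoc]
      _ ⊆ g '' B (g^[n] x) (τ ^ n * r) := hexp _ _ (by positivity)
      _ ⊆ g '' (g^[n] '' B x r) := image_mono ih
      _ = g^[n + 1] '' B x r := by rw [Function.iterate_succ', image_comp]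

theorem eventually_leafBall_iterate_subset_image_iterate (hmono : ∀ x, Monotone (B x))
    (hτ : 1 < τ) (hexp : ∀ (x : α) (L : ℝ), 0 < L → B (g x) (τ * L) ⊆ g '' B x L)
    (x : α) {r : ℝ} (hr : 0 < r) (L : ℝ) :
    ∃ N : ℕ, ∀ n ≥ N, B (g^[n] x) L ⊆ g^[n] '' B x r := by
  obtain ⟨N, hN⟩ := pow_unbounded_of_one_lt (L / r) hτ
  refine ⟨N, fun n hn => (hmono _ ?_).trans
    (leafBall_iterate_subset_image_iterate g B (by linarith) hexp x hr n)⟩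
  calc L = L / r * r := (div_mul_cancel₀ L hr.ne').symm
    _ ≤ τ ^ n * r := by gcongr; exact hN.le.trans (pow_le_pow_right₀ hτ.le hn)

end LeafBalls

theorem EpsDense.inter_ball_nonempty {M : Type*} [MetricSpace M] {ε δ : ℝ} {S : Set M}
    (hS : EpsDense ε S) (hεδ : ε < δ) (v : M) : (S ∩ ball v δ).Nonempty := by
  obtain ⟨s, hs, hvs⟩ := hS v
  exact ⟨s, hs, mem_ball'.2 (hvs.trans_lt hεδ)⟩

theorem mixing_of_expanding_minimal_foliation_general
    {M : Type*} [MetricSpace M]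
    (f : M ≃ₜ M) (B : M → ℝ → Set M)
    (hmono : ∀ x : M, Monotone (B x))
    (hplaque : ∀ U : Set M, IsOpen U → ∀ x ∈ U, ∃ r > (0 : ℝ), B x r ⊆ U)
    (hdense : ∀ ε > (0 : ℝ), ∃ L > (0 : ℝ), ∀ x : M, EpsDense ε (B x L))
    (τ : ℝ) (hτ : 1 < τ)
    (hexp : ∀ (x : M) (L : ℝ), 0 < L → B (f x) (τ * L) ⊆ f '' (B x L)) :
    ∀ U V : Set M, IsOpen U → U.Nonempty → IsOpen V → V.Nonempty →
      ∃ N : ℕ, ∀ n ≥ N, ((⇑f)^[n] '' U ∩ V).Nonempty := by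
  rintro U V hU ⟨x, hxU⟩ hV ⟨v, hvV⟩
  obtain ⟨r, hr, hrU⟩ := hplaque U hU x hxU
  obtain ⟨δ, hδ, hδV⟩ := isOpen_iff.1 hV v hvV
  obtain ⟨L, -, hL⟩ := hdense (δ / 2) (by positivity)
  obtain ⟨N, hN⟩ := eventually_leafBall_iterate_subset_image_iterate f B hmono hτ hexp x hr L
  refine ⟨N, fun n hn => ?_⟩
  obtain ⟨s, hsB, hsv⟩ := (hL (f^[n] x)).inter_ball_nonempty (half_lt_self hδ) v
  exact ⟨s, image_mono hrU (hN n hn hsB), hδV hsv⟩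

/-- A homeomorphism of a compact metric space whose (strong unstable) foliation has
uniformly dense leaf balls and which uniformly expands leaf distances is topologically
mixing. Here `B x L` is the leaf ball of radius `L` (in the intrinsic leaf metric)
around `x`; the hypotheses state: monotonicity in the radius, that every nonempty open
set contains a leaf ball of positive radius around each of its points, uniform density
of leaf `L`-balls for suitable `L = L(ε)`, and uniform expansion of leaf distances by
a factor `τ > 1` (expressed via `B (f x) (τ * L) ⊆ f '' (B x L)`). -/
theorem mixing_of_expanding_minimal_foliation
    {M : Type*} [MetricSpace M] [CompactSpace M] [Nonempty M]
    (f : M ≃ₜ M) (B : M → ℝ → Set M)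
    (hmono : ∀ x : M, Monotone (B x))
    (hplaque : ∀ U : Set M, IsOpen U → ∀ x ∈ U, ∃ r > (0 : ℝ), B x r ⊆ U)
    (hdense : ∀ ε > (0 : ℝ), ∃ L > (0 : ℝ), ∀ x : M, EpsDense ε (B x L))
    (τ : ℝ) (hτ : 1 < τ)
    (hexp : ∀ (x : M) (L : ℝ), 0 < L → B (f x) (τ * L) ⊆ f '' (B x L)) :
    ∀ U V : Set M, IsOpen U → U.Nonempty → IsOpen V → V.Nonempty →
      ∃ N : ℕ, ∀ n ≥ N, ((⇑f)^[n] '' U ∩ V).Nonempty :=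
  mixing_of_expanding_minimal_foliation_general f B hmono hplaque hdense τ hτ hexp
end

section
/- Average estimate making the closing orbit hyperbolic: Let λ > 0, χ ∈ (0, λ/100), τ > e^{5χ}, and constants m_1 > 0, C' > 1, N_2, N_4 ∈ ℕ fixed. Suppose an orbit segment of length m = n + t + N_2 + N_3 + N_4 (with t = ⌊10χn/λ⌋ + 1 and N_3 ≤ (9nχ − N_2 log m_1 + const)/log τ) has center log-derivatives a_0,...,a_{m-1} satisfying: Σ_{i=0}^{n-1} a_i ≥ −log C' − 3nχ; a_i ≥ log m_1 for n ≤ i < n+N_2; a_i ≥ log τ for n+N_2 ≤ i < n+N_2+N_3; and Σ_{i=m-j}^{m-1} a_i ≥ jλ for j ≤ t+N_4. Then for all n sufficiently large, Σ_{i=0}^{m-1} a_i ≥ 5χ·m. -/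
/-- Average estimate making the closing orbit hyperbolic: a purely arithmetic statement
about the logarithms `a i` of the center derivative along the closing orbit segment.
For `n` large, the total sum is at least `5χ·m`. -/
theorem closing_orbit_average_estimate
    (lam χ τ m1 C' const : ℝ) (N2 N4 : ℕ)
    (hlam : 0 < lam) (hχ0 : 0 < χ) (hχ : χ < lam / 100)
    (hτ : Real.exp (5 * χ) < τ) (hm1 : 0 < m1) (hC : 1 < C') :
    ∃ N : ℕ, ∀ n ≥ N, ∀ t N3 m : ℕ, ∀ a : ℕ → ℝ,
      t = ⌊10 * χ * (n : ℝ) / lam⌋₊ + 1 →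
      (N3 : ℝ) ≤ (9 * (n : ℝ) * χ - (N2 : ℝ) * Real.log m1 + const) / Real.log τ →
      m = n + t + N2 + N3 + N4 →
      (- Real.log C' - 3 * (n : ℝ) * χ ≤ ∑ i ∈ Finset.range n, a i) →
      (∀ i, n ≤ i → i < n + N2 → Real.log m1 ≤ a i) →
      (∀ i, n + N2 ≤ i → i < n + N2 + N3 → Real.log τ ≤ a i) →
      (∀ j ≤ t + N4, (j : ℝ) * lam ≤ ∑ i ∈ Finset.Ico (m - j) m, a i) →
      5 * χ * (m : ℝ) ≤ ∑ i ∈ Finset.range m, a i := by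
  refine ⟨⌈(Real.log C' - (N2 : ℝ) * Real.log m1 + 5 * χ * (N2 : ℝ) + 5 * χ) / χ⌉₊, ?_⟩
  intro n hn t N3 m a ht hN3 hm h1 h2 h3 h4
  have hτ0 : (0:ℝ) < τ := lt_trans (Real.exp_pos _) hτ
  have hlogτ : 5 * χ ≤ Real.log τ := le_of_lt ((Real.lt_log_iff_exp_lt hτ0).2 hτ)
  -- bound on K
  have hK : Real.log C' - (N2 : ℝ) * Real.log m1 + 5 * χ * (N2 : ℝ) + 5 * χ ≤ χ * n := by
    have h1' := Nat.le_ceil ((Real.log C' - (N2 : ℝ) * Real.log m1 + 5 * χ * (N2 : ℝ) + 5 * χ) / χ)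
    have h2' : ((⌈(Real.log C' - (N2 : ℝ) * Real.log m1 + 5 * χ * (N2 : ℝ) + 5 * χ) / χ⌉₊ : ℕ) : ℝ)
        ≤ (n : ℝ) := Nat.cast_le.2 hn
    have := (div_le_iff₀ hχ0).1 (h1'.trans h2')
    linarith
  -- bounds on t
  have ht1 : 10 * χ * (n : ℝ) / lam < (t : ℝ) := by
    rw [ht]; push_cast; exact Nat.lt_floor_add_one _
  have htlam : 10 * χ * (n : ℝ) < (t : ℝ) * lam := by
    exact (div_lt_iff₀ hlam).1 ht1
  have ht2 : (t : ℝ) ≤ 10 * χ * (n : ℝ) / lam + 1 := by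
    rw [ht]; push_cast
    linarith [Nat.floor_le (show (0:ℝ) ≤ 10 * χ * (n:ℝ) / lam by positivity)]
  have htn : (t : ℝ) ≤ (n : ℝ) / 10 + 1 := by
    have hd : 10 * χ * (n : ℝ) / lam ≤ (n : ℝ) / 10 := by
      rw [div_le_iff₀ hlam]
      nlinarith [Nat.cast_nonneg (α := ℝ) n]
    linarith
  have h5t : 5 * χ * (t : ℝ) ≤ 5 * χ * ((n : ℝ) / 10 + 1) :=
    mul_le_mul_of_nonneg_left htn (by positivity)
  -- block bounds
  have hb2 : (N2 : ℝ) * Real.log m1 ≤ ∑ i ∈ Finset.Ico n (n + N2), a i := by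
    have := Finset.card_nsmul_le_sum (Finset.Ico n (n + N2)) a (Real.log m1)
      (fun i hi => h2 i (Finset.mem_Ico.1 hi).1 (Finset.mem_Ico.1 hi).2)
    simpa [Nat.card_Ico, nsmul_eq_mul] using this
  have hb3 : (N3 : ℝ) * Real.log τ ≤ ∑ i ∈ Finset.Ico (n + N2) (n + N2 + N3), a i := by
    have := Finset.card_nsmul_le_sum (Finset.Ico (n + N2) (n + N2 + N3)) a (Real.log τ)
      (fun i hi => h3 i (Finset.mem_Ico.1 hi).1 (Finset.mem_Ico.1 hi).2)
    simpa [Nat.card_Ico, nsmul_eq_mul] using this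
  have hb3' : (N3 : ℝ) * (5 * χ) ≤ (N3 : ℝ) * Real.log τ :=
    mul_le_mul_of_nonneg_left hlogτ (Nat.cast_nonneg _)
  have hb4 : ((t : ℝ) + (N4 : ℝ)) * lam ≤ ∑ i ∈ Finset.Ico (n + N2 + N3) m, a i := by
    have h := h4 (t + N4) le_rfl
    have hms : m - (t + N4) = n + N2 + N3 := by omega
    rw [hms] at h
    push_cast at h
    linarith
  have hl4 : (N4 : ℝ) * (5 * χ) ≤ (N4 : ℝ) * lam :=
    mul_le_mul_of_nonneg_left (by linarith) (Nat.cast_nonneg _)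
  have hmr : (m : ℝ) = (n : ℝ) + t + N2 + N3 + N4 := by
    rw [hm]; push_cast; ring
  have hχn : 0 ≤ χ * (n : ℝ) := by positivity
  rw [hmr, Finset.range_eq_Ico,
    ← Finset.sum_Ico_consecutive a (Nat.zero_le (n + N2 + N3)) (show n + N2 + N3 ≤ m by omega),
    ← Finset.sum_Ico_consecutive a (Nat.zero_le (n + N2)) (show n + N2 ≤ n + N2 + N3 by omega),
    ← Finset.sum_Ico_consecutive a (Nat.zero_le n) (show n ≤ n + N2 by omega),
    ← Finset.range_eq_Ico]
  linarith [h1, hb2, hb3, hb3', hb4, hl4, htlam, h5t, hK, hχn]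
end
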